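/- Fix l ∈ ℕ, l ≥ 1, and let K_l : [0,∞) → [0,1] be the folding map defined by K_l(x) = lx − 2i for x ∈ [2i/l, (2i+1)/l] (i = 0,1,2,…) and K_l(x) = −lx + 2i for x ∈ [(2i−1)/l, 2i/l] (i = 1,2,…). Let p = Σ_{i=0}^{N} ρ_i·𝟙_{[i/l,(i+1)/l)} be a nonnegative rational step function of width 1/l on [0,∞) (ρ_i ≥ 0, N ∈ ℕ). Then the pushforward under K_l of the measure with density p equals ‖p‖_{L¹[0,∞)} times Lebesgue measure restricted to [0,1]; equivalently, the density of (K_l)_*(p·Lebesgue) is the constant ‖p‖_{L¹[0,∞)} on [0,1]. -/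

import Mathlib

open MeasureTheory

/-- The folding map `K_l : [0,∞) → [0,1]`, `K_l(x) = lx − 2i` on `[2i/l,(2i+1)/l]`
and `K_l(x) = −lx + 2i` on `[(2i−1)/l, 2i/l]`; equivalently
`K_l(x) = 1 − |((lx) mod 2) − 1|`. -/
noncomputable def foldMap (l : ℕ) (x : ℝ) : ℝ :=
  1 - |2 * Int.fract ((l : ℝ) * x / 2) - 1|

/-!
On each interval `[i/l, (i+1)/l)` the folding map is affine with slope `±l` and maps the
interval onto `[0,1)` (if `i` is even) or `(0,1]` (if `i` is odd). Hence it pushes Lebesgue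
measure on that interval forward to `l⁻¹` times Lebesgue measure on `[0,1]`, and a step
function with values `ρ_i` is pushed forward to `(∑ ρ_i / l) • 𝟙_[0,1] = ‖p‖₁ • 𝟙_[0,1]`.
-/

open Set
open scoped ENNReal

section FinsetSumIndicator

variable {α ι : Type*} [MeasurableSpace α] (μ : Measure α)

theorem withDensity_finsetSum (s : Finset ι) {f : ι → α → ℝ≥0∞}
    (hf : ∀ i ∈ s, Measurable (f i)) :
    μ.withDensity (∑ i ∈ s, f i) = ∑ i ∈ s, μ.withDensity (f i) := by
  classical
  induction s using Finset.induction_on with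
  | empty => simp
  | insert j s hj ih =>
    rw [Finset.sum_insert hj, Finset.sum_insert hj,
      withDensity_add_left (hf j (Finset.mem_insert_self j s)),
      ih fun i hi => hf i (Finset.mem_insert_of_mem hi)]

theorem withDensity_ofReal_finsetSum_indicator_const (s : Finset ι) {t : ι → Set α}
    (ht : ∀ i ∈ s, MeasurableSet (t i)) {c : ι → ℝ} (hc : ∀ i ∈ s, 0 ≤ c i) :
    μ.withDensity (fun x => ENNReal.ofReal (∑ i ∈ s, (t i).indicator (fun _ => c i) x))
      = ∑ i ∈ s, ENNReal.ofReal (c i) • μ.restrict (t i) := by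
  have hdensity : (fun x => ENNReal.ofReal (∑ i ∈ s, (t i).indicator (fun _ => c i) x))
      = ∑ i ∈ s, (t i).indicator (fun _ => ENNReal.ofReal (c i)) := by
    funext x
    rw [Finset.sum_apply, ENNReal.ofReal_sum_of_nonneg
      fun i hi => indicator_nonneg (fun _ _ => hc i hi) x]
    exact Finset.sum_congr rfl fun i _ => by by_cases hx : x ∈ t i <;> simp [hx]
  rw [hdensity, withDensity_finsetSum μ s fun i hi => measurable_const.indicator (ht i hi)]
  exact Finset.sum_congr rfl fun i hi => by
    rw [withDensity_indicator (ht i hi), withDensity_const]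

theorem integral_finsetSum_indicator_const (s : Finset ι) {t : ι → Set α}
    (ht : ∀ i ∈ s, MeasurableSet (t i)) (hμt : ∀ i ∈ s, μ (t i) ≠ ∞) (c : ι → ℝ) :
    ∫ x, ∑ i ∈ s, (t i).indicator (fun _ => c i) x ∂μ = ∑ i ∈ s, μ.real (t i) * c i := by
  rw [integral_finsetSum s fun i hi =>
    (integrableOn_const (hμt i hi)).integrable_indicator (ht i hi)]
  exact Finset.sum_congr rfl fun i hi => integral_indicator_const (c i) (ht i hi)

end FinsetSumIndicator

theorem map_volume_mul_add {a : ℝ} (b : ℝ) (ha : a ≠ 0) :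
    volume.map (fun x => a * x + b) = ENNReal.ofReal |a⁻¹| • volume := by
  have hcomp : (fun x : ℝ => a * x + b) = (· + b) ∘ (a * ·) := rfl
  rw [hcomp, ← Measure.map_map (measurable_add_const b) (measurable_const_mul a),
    Real.map_volume_mul_left ha, Measure.map_smul,
    (measurePreserving_add_right volume b).map_eq]

theorem map_restrict_preimage_mul_add {a : ℝ} (b : ℝ) (ha : a ≠ 0) {t : Set ℝ}
    (ht : MeasurableSet t) :
    (volume.restrict ((fun x => a * x + b) ⁻¹' t)).map (fun x => a * x + b)
      = ENNReal.ofReal |a⁻¹| • volume.restrict t := by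
  rw [← Measure.restrict_map (by fun_prop) ht, map_volume_mul_add b ha, Measure.restrict_smul]

theorem measurable_foldMap (l : ℕ) : Measurable (foldMap l) := by
  unfold foldMap
  fun_prop

section Pieces

variable {l : ℕ}

theorem foldMap_eqOn_Ico_of_even {i : ℕ} (hl : 0 < l) (hi : Even i) :
    EqOn (foldMap l) (fun x => (l : ℝ) * x + -i) (Ico (i / l) ((i + 1) / l)) := by
  obtain ⟨m, rfl⟩ := hi
  intro x hx
  have hl0 : (0 : ℝ) < l := by exact_mod_cast hl
  rw [mem_Ico, div_le_iff₀ hl0, lt_div_iff₀ hl0] at hx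
  push_cast at hx ⊢
  have hfract : Int.fract ((l : ℝ) * x / 2) = l * x / 2 - m :=
    Int.fract_eq_iff.2 ⟨by linarith, by linarith, m, by push_cast; ring⟩
  rw [foldMap, hfract, abs_of_nonpos (by linarith)]
  ring

theorem foldMap_eqOn_Ico_of_odd {i : ℕ} (hl : 0 < l) (hi : Odd i) :
    EqOn (foldMap l) (fun x => -(l : ℝ) * x + (i + 1)) (Ico (i / l) ((i + 1) / l)) := by
  obtain ⟨m, rfl⟩ := hi
  intro x hx
  have hl0 : (0 : ℝ) < l := by exact_mod_cast hl
  rw [mem_Ico, div_le_iff₀ hl0, lt_div_iff₀ hl0] at hx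
  push_cast at hx ⊢
  have hfract : Int.fract ((l : ℝ) * x / 2) = l * x / 2 - m :=
    Int.fract_eq_iff.2 ⟨by linarith, by linarith, m, by push_cast; ring⟩
  rw [foldMap, hfract, abs_of_nonneg (by linarith)]
  ring

theorem map_restrict_Ico_foldMap (hl : 0 < l) (i : ℕ) :
    (volume.restrict (Ico ((i : ℝ) / l) ((i + 1) / l))).map (foldMap l)
      = ENNReal.ofReal (l : ℝ)⁻¹ • volume.restrict (Icc (0 : ℝ) 1) := by
  have hl0 : (0 : ℝ) < l := by exact_mod_cast hl
  have hae {g : ℝ → ℝ} (hg : EqOn (foldMap l) g (Ico ((i : ℝ) / l) ((i + 1) / l))) :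
      foldMap l =ᵐ[volume.restrict (Ico ((i : ℝ) / l) ((i + 1) / l))] g :=
    (ae_restrict_iff' measurableSet_Ico).2 (ae_of_all _ hg)
  rcases Nat.even_or_odd i with hi | hi
  · have hpre : (fun x => (l : ℝ) * x + -i) ⁻¹' Ico 0 1
        = Ico ((i : ℝ) / l) ((i + 1) / l) := by
      ext x
      simp only [mem_preimage, mem_Ico, div_le_iff₀ hl0, lt_div_iff₀ hl0]
      constructor <;> rintro ⟨h0, h1⟩ <;> constructor <;> linarith
    rw [Measure.map_congr (hae (foldMap_eqOn_Ico_of_even hl hi)), ← hpre,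
      map_restrict_preimage_mul_add _ hl0.ne' measurableSet_Ico, abs_of_pos (inv_pos.2 hl0),
      Measure.restrict_congr_set Ico_ae_eq_Icc]
  · have hpre : (fun x => -(l : ℝ) * x + (i + 1)) ⁻¹' Ioc 0 1
        = Ico ((i : ℝ) / l) ((i + 1) / l) := by
      ext x
      simp only [mem_preimage, mem_Ioc, mem_Ico, div_le_iff₀ hl0, lt_div_iff₀ hl0]
      constructor <;> rintro ⟨h0, h1⟩ <;> constructor <;> linarith
    rw [Measure.map_congr (hae (foldMap_eqOn_Ico_of_odd hl hi)), ← hpre,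
      map_restrict_preimage_mul_add _ (neg_ne_zero.2 hl0.ne') measurableSet_Ioc, abs_inv,
      abs_neg, abs_of_pos hl0, Measure.restrict_congr_set Ioc_ae_eq_Icc]

end Pieces

/-- For `l ≥ 1` and a nonnegative rational step function `p` of width
`1/l` on `[0,∞)`, the pushforward under `K_l` of the measure with density `p` is
`‖p‖_{L¹[0,∞)}` times Lebesgue measure restricted to `[0,1]`. -/
theorem foldMap_pushforward_of_step
    (l : ℕ) (hl : 1 ≤ l) (N : ℕ) (ρ : ℕ → ℝ) (hρ : ∀ i, 0 ≤ ρ i)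
    (p : ℝ → ℝ)
    (hp : p = fun x => ∑ i ∈ Finset.range (N + 1),
      Set.indicator (Set.Ico ((i : ℝ) / l) (((i : ℝ) + 1) / l)) (fun _ => ρ i) x) :
    (volume.withDensity (fun x => ENNReal.ofReal (p x))).map (foldMap l)
      = ENNReal.ofReal (∫ x in Set.Ici (0 : ℝ), p x) •
          volume.restrict (Set.Icc (0 : ℝ) 1) := by
  have hl0 : (0 : ℝ) < l := by exact_mod_cast hl
  have hmass : ∫ x in Ici (0 : ℝ), p x = ∑ i ∈ Finset.range (N + 1), ρ i * (l : ℝ)⁻¹ := by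
    rw [hp, integral_finsetSum_indicator_const _ _ (fun _ _ => measurableSet_Ico)
      fun _ _ => (Measure.restrict_apply_le _ _).trans_lt measure_Ico_lt_top |>.ne]
    refine Finset.sum_congr rfl fun i _ => ?_
    rw [measureReal_restrict_apply measurableSet_Ico,
      inter_eq_left.2 (Ico_subset_Ici_self.trans (Ici_subset_Ici.2 (by positivity))),
      Real.volume_real_Ico_of_le (by gcongr; linarith)]
    field_simp
    ring
  rw [hp, withDensity_ofReal_finsetSum_indicator_const _ _ (fun _ _ => measurableSet_Ico)
      fun i _ => hρ i, ← Measure.mapₗ_apply_of_measurable (measurable_foldMap l), map_sum,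
    ← hp, hmass, ENNReal.ofReal_sum_of_nonneg fun i _ => mul_nonneg (hρ i) (by positivity),
    Finset.sum_smul]
  refine Finset.sum_congr rfl fun i _ => ?_
  rw [LinearMap.map_smul, Measure.mapₗ_apply_of_measurable (measurable_foldMap l),
    map_restrict_Ico_foldMap hl i, smul_smul, ← ENNReal.ofReal_mul (hρ i)]
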